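/- L₊(x·∇Q∞ + 2Q∞) = −2λ Q∞ pointwise on ℝ³, where (x·∇Q∞)(x) := x·∇Q∞(x). -/

import Mathlib

open MeasureTheory
open scoped SchwartzMap

noncomputable section

abbrev R3 := EuclideanSpace ℝ (Fin 3)

/-- Newtonian potential convolution `(|x|⁻¹ ∗ f)(x) = ∫ f(y)/|x-y| dy`. -/
def conv (f : R3 → ℝ) (x : R3) : ℝ := ∫ y : R3, f y / ‖x - y‖

/-- Radial symmetry. -/
def Radial (f : R3 → ℝ) : Prop := ∀ x y : R3, ‖x‖ = ‖y‖ → f x = f y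

/-- The Laplacian on `ℝ³`, as a sum of second directional derivatives along the
standard basis. -/
def lap (f : R3 → ℝ) (x : R3) : ℝ :=
  ∑ i : Fin 3,
    fderiv ℝ (fun y => fderiv ℝ f y (EuclideanSpace.single i (1 : ℝ))) x
      (EuclideanSpace.single i (1 : ℝ))

/-- The linearized operator
`L₊ξ = −(1/(2m))Δξ + λξ − (|x|⁻¹ ∗ Q²) ξ − 2(|x|⁻¹ ∗ (Qξ)) Q`. -/
def Lplus (m lam : ℝ) (Q : R3 → ℝ) (f : R3 → ℝ) (x : R3) : ℝ :=
  -(1 / (2 * m)) * lap f x + lam * f x - conv (fun y => (Q y) ^ 2) x * f x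
    - 2 * conv (fun y => Q y * f y) x * Q x

/-!
Let `V := |x|⁻¹ ∗ Q²`. Two commutation relations with the Euler operator `x · ∇` do the work.
First, `Δ (x · ∇f) = 2 Δf + x · ∇(Δf)`, because `∂ᵢ (x · ∇f) = ∂ᵢ f + x · ∇(∂ᵢ f)`.
Second, the Newtonian kernel is homogeneous of degree `-1` on `ℝ³`, so
`V (t x) = t² ∫ Q(t z)² / |x - z| dz`; differentiating at `t = 1` under the integral gives
`x · ∇V = 2 V + |x|⁻¹ ∗ (x · ∇(Q²))` along every ray. Applying `x · ∇` to
`-(1/2m) ΔQ + λQ = VQ` and using `x · ∇(Q²) = 2 Q (x · ∇Q)`, all terms of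
`L₊(x · ∇Q + 2Q)` cancel except `-2λQ`.
-/

open Metric Set Filter Topology

section SingularIntegral

variable {E : Type*} [NormedAddCommGroup E] [NormedSpace ℝ E] [FiniteDimensional ℝ E]
  [MeasurableSpace E] [BorelSpace E] {μ : Measure E} [μ.IsAddHaarMeasure]

theorem integrableOn_ball_zero_inv_norm (hE : 1 < Module.finrank ℝ E) :
    IntegrableOn (fun y : E => ‖y‖⁻¹) (ball 0 1) μ :=
  integrableOn_ball_of_norm_le_rpow hE.le (C := 1) (α := 1) (by exact_mod_cast hE)
    (ae_of_all _ fun y => by simp [Real.rpow_neg_one]) (by fun_prop)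

theorem MeasureTheory.Integrable.div_norm_sub {f : E → ℝ} (hE : 1 < Module.finrank ℝ E)
    (hf : Integrable f μ) {C : ℝ} (hC : ∀ y, |f y| ≤ C) (x : E) :
    Integrable (fun y => f y / ‖x - y‖) μ := by
  have hsing : Integrable ((ball (0 : E) 1).indicator fun y => ‖y‖⁻¹) μ :=
    (integrableOn_ball_zero_inv_norm hE).integrable_indicator measurableSet_ball
  refine (((hsing.comp_sub_left x).const_mul C).add hf.abs).mono'
    (hf.aemeasurable.div (by fun_prop)).aestronglyMeasurable (ae_of_all _ fun y => ?_)
  simp only [Pi.add_apply, Real.norm_eq_abs, abs_div, abs_norm]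
  by_cases hy : ‖x - y‖ < 1
  · rw [indicator_of_mem (mem_ball_zero_iff.2 hy), div_eq_mul_inv]
    exact (mul_le_mul_of_nonneg_right (hC y) (by positivity)).trans
      (le_add_of_nonneg_right (abs_nonneg _))
  · rw [indicator_of_notMem (by simpa using hy : x - y ∉ ball 0 1), mul_zero, zero_add]
    exact div_le_self (abs_nonneg _) (not_lt.1 hy)

end SingularIntegral

namespace SchwartzMap

variable {E F : Type*} [NormedAddCommGroup E] [NormedSpace ℝ E] [NormedAddCommGroup F]
  [NormedSpace ℝ F]

/-- The Euler operator `g ↦ x · ∇g`. -/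
def euler (g : 𝓢(E, F)) : 𝓢(E, F) :=
  bilinLeftCLM (ContinuousLinearMap.id ℝ (E →L[ℝ] F)) Function.HasTemperateGrowth.id'
    (fderivCLM ℝ E F g)

@[simp]
theorem euler_apply (g : 𝓢(E, F)) (y : E) : g.euler y = fderiv ℝ g y y := rfl

theorem exists_norm_fderiv_smul_apply_le (g : 𝓢(E, F)) (k : ℕ) :
    ∃ C, 0 ≤ C ∧ ∀ t : ℝ, 1 / 2 ≤ t → ∀ z : E,
      ‖fderiv ℝ g (t • z) z‖ ≤ C * (1 + ‖z‖) ^ (-(k : ℝ)) := by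
  set S : ℝ :=
    2 ^ (k + 1) * (Finset.Iic (k + 1, 1)).sup (fun m => SchwartzMap.seminorm ℝ m.1 m.2) g
  refine ⟨2 ^ (k + 1) * S, by positivity, fun t ht z => ?_⟩
  have hw : 1 + ‖z‖ ≤ 2 * (1 + ‖t • z‖) := by
    rw [norm_smul, Real.norm_eq_abs, abs_of_pos (by linarith)]
    nlinarith [norm_nonneg z]
  have hdecay : (1 + ‖t • z‖) ^ (k + 1) * ‖fderiv ℝ g (t • z)‖ ≤ S := by
    simpa [norm_iteratedFDeriv_one] using
      one_add_le_sup_seminorm_apply (𝕜 := ℝ) (m := (k + 1, 1)) le_rfl le_rfl g (t • z)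
  rw [Real.rpow_neg (by positivity), Real.rpow_natCast, ← div_eq_mul_inv,
    le_div_iff₀ (by positivity)]
  calc ‖fderiv ℝ g (t • z) z‖ * (1 + ‖z‖) ^ k
      ≤ ‖fderiv ℝ g (t • z)‖ * (1 + ‖z‖) * (1 + ‖z‖) ^ k := by
        gcongr
        exact ((fderiv ℝ g (t • z)).le_opNorm z).trans (by gcongr; linarith)
    _ = (1 + ‖z‖) ^ (k + 1) * ‖fderiv ℝ g (t • z)‖ := by ring
    _ ≤ (2 * (1 + ‖t • z‖)) ^ (k + 1) * ‖fderiv ℝ g (t • z)‖ := by gcongr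
    _ = 2 ^ (k + 1) * ((1 + ‖t • z‖) ^ (k + 1) * ‖fderiv ℝ g (t • z)‖) := by
          rw [mul_pow, mul_assoc]
    _ ≤ 2 ^ (k + 1) * S := by gcongr

variable [FiniteDimensional ℝ E] [MeasurableSpace E] [BorelSpace E] {μ : Measure E}
  [μ.IsAddHaarMeasure]

theorem integrable_div_norm_sub (hE : 1 < Module.finrank ℝ E) (g : 𝓢(E, ℝ)) (x : E) :
    Integrable (fun y => g y / ‖x - y‖) μ :=
  g.integrable.div_norm_sub hE (fun y => g.norm_le_seminorm ℝ y) x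

theorem hasDerivAt_integral_comp_smul_div_norm_sub (hE : 1 < Module.finrank ℝ E)
    (g : 𝓢(E, ℝ)) (x : E) :
    HasDerivAt (fun t : ℝ => ∫ z, g (t • z) / ‖x - z‖ ∂μ) (∫ z, g.euler z / ‖x - z‖ ∂μ) 1 := by
  set k := Module.finrank ℝ E + 1
  obtain ⟨C, hC, hfderiv⟩ := g.exists_norm_fderiv_smul_apply_le k
  have hweight : ∀ z : E, (1 + ‖z‖) ^ (-(k : ℝ)) ≤ 1 := fun z =>
    Real.rpow_le_one_of_one_le_of_nonpos (by linarith [norm_nonneg z]) (by simp)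
  have hbound : Integrable (fun z => C * (1 + ‖z‖) ^ (-(k : ℝ)) / ‖x - z‖) μ :=
    ((integrable_one_add_norm (by simp [k])).const_mul C).div_norm_sub hE
      (fun z => by
        rw [abs_of_nonneg (by positivity)]
        exact mul_le_of_le_one_right hC (hweight z)) x
  have hmeas : ∀ t : ℝ, AEStronglyMeasurable (fun z => g (t • z) / ‖x - z‖) μ := fun t =>
    (Measurable.div (by fun_prop) (by fun_prop)).aestronglyMeasurable
  have hmeas' : AEStronglyMeasurable (fun z => fderiv ℝ g ((1 : ℝ) • z) z / ‖x - z‖) μ := by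
    simpa [Pi.div_def] using (g.euler.continuous.measurable.div (by fun_prop)).aestronglyMeasurable
  have hdom : ∀ z, ∀ t ∈ ball (1 : ℝ) (1 / 2),
      ‖fderiv ℝ g (t • z) z / ‖x - z‖‖ ≤ C * (1 + ‖z‖) ^ (-(k : ℝ)) / ‖x - z‖ := by
    intro z t ht
    rw [mem_ball, Real.dist_eq, abs_lt] at ht
    rw [norm_div, norm_norm]
    exact div_le_div_of_nonneg_right (hfderiv t (by linarith) z) (norm_nonneg _)
  have hderiv : ∀ z, ∀ t : ℝ,
      HasDerivAt (fun s : ℝ => g (s • z) / ‖x - z‖) (fderiv ℝ g (t • z) z / ‖x - z‖) t := by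
    intro z t
    have hray : HasDerivAt (fun s : ℝ => s • z) z t := by
      simpa using (hasDerivAt_id t).smul_const z
    exact (g.differentiableAt.hasFDerivAt.comp_hasDerivAt t hray).div_const _
  simpa using (hasDerivAt_integral_of_dominated_loc_of_deriv_le (ball_mem_nhds 1 one_half_pos)
    (Eventually.of_forall hmeas) (by simpa using g.integrable_div_norm_sub hE x) hmeas'
    (ae_of_all _ hdom) hbound (ae_of_all _ fun z t _ => hderiv z t)).2

end SchwartzMap

section EulerOperator

variable {E F : Type*} [NormedAddCommGroup E] [NormedSpace ℝ E] [NormedAddCommGroup F]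
  [NormedSpace ℝ F] {f : E → F} {n : WithTop ℕ∞}

theorem ContDiff.fderiv_apply_const (hf : ContDiff ℝ (n + 1) f) (v : E) :
    ContDiff ℝ n fun y => fderiv ℝ f y v :=
  (hf.fderiv_right le_rfl).clm_apply contDiff_const

theorem ContDiff.fderiv_apply_self (hf : ContDiff ℝ (n + 1) f) :
    ContDiff ℝ n fun y => fderiv ℝ f y y :=
  (hf.fderiv_right le_rfl).clm_apply contDiff_id

theorem DifferentiableAt.hasDerivAt_comp_smul {x : E} (hf : DifferentiableAt ℝ f x) :
    HasDerivAt (fun t : ℝ => f (t • x)) (fderiv ℝ f x x) 1 := by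
  have hray : HasDerivAt (fun t : ℝ => t • x) x 1 := by
    simpa using (hasDerivAt_id (1 : ℝ)).smul_const x
  exact hf.hasFDerivAt.comp_hasDerivAt_of_eq 1 hray (one_smul ℝ x).symm

theorem fderiv_fderiv_apply_self (hf : ContDiff ℝ 2 f) (y v : E) :
    fderiv ℝ (fun z => fderiv ℝ f z z) y v
      = fderiv ℝ f y v + fderiv ℝ (fun z => fderiv ℝ f z v) y y := by
  have hf' : DifferentiableAt ℝ (fderiv ℝ f) y :=
    (hf.fderiv_right (m := 1) (by norm_num)).differentiable one_ne_zero y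
  rw [fderiv_clm_apply hf' differentiableAt_fun_id,
    fderiv_clm_apply hf' (differentiableAt_const v)]
  simp [(hf.contDiffAt.isSymmSndFDerivAt (by simp)).eq v y]

end EulerOperator

section Laplacian

variable {f g : R3 → ℝ}

theorem lap_add (hf : ContDiff ℝ 2 f) (hg : ContDiff ℝ 2 g) (x : R3) :
    lap (fun y => f y + g y) x = lap f x + lap g x := by
  simp only [lap, ← Finset.sum_add_distrib]
  refine Finset.sum_congr rfl fun i _ => ?_
  set v : R3 := EuclideanSpace.single i 1
  have hsum : (fun y => fderiv ℝ (fun z => f z + g z) y v)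
      = fun y => fderiv ℝ f y v + fderiv ℝ g y v := funext fun y => by
    rw [fderiv_fun_add (hf.differentiable two_ne_zero y) (hg.differentiable two_ne_zero y)]
    rfl
  rw [hsum, fderiv_fun_add (((hf.fderiv_apply_const (n := 1)) v).differentiable one_ne_zero x)
    (((hg.fderiv_apply_const (n := 1)) v).differentiable one_ne_zero x)]
  rfl

theorem lap_const_mul (c : ℝ) (hf : ContDiff ℝ 2 f) (x : R3) :
    lap (fun y => c * f y) x = c * lap f x := by
  simp only [lap, Finset.mul_sum]
  refine Finset.sum_congr rfl fun i _ => ?_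
  set v : R3 := EuclideanSpace.single i 1
  have hmul : (fun y => fderiv ℝ (fun z => c * f z) y v) = fun y => c * fderiv ℝ f y v :=
    funext fun y => by
      rw [fderiv_const_mul (hf.differentiable two_ne_zero y)]
      rfl
  rw [hmul, fderiv_const_mul (((hf.fderiv_apply_const (n := 1)) v).differentiable one_ne_zero x)]
  rfl

theorem ContDiff.lap {n : WithTop ℕ∞} (hf : ContDiff ℝ (n + 2) f) : ContDiff ℝ n (lap f) := by
  have hf' : ContDiff ℝ (n + 1 + 1) f := hf.of_le (by rw [add_assoc, one_add_one_eq_two])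
  exact ContDiff.sum fun i _ => (hf'.fderiv_apply_const _).fderiv_apply_const _

theorem lap_fderiv_apply_self (hf : ContDiff ℝ 3 f) (x : R3) :
    lap (fun y => fderiv ℝ f y y) x = 2 * lap f x + fderiv ℝ (lap f) x x := by
  set e : Fin 3 → R3 := fun i => EuclideanSpace.single i 1
  have hD : ∀ i, ContDiff ℝ 2 fun y => fderiv ℝ f y (e i) :=
    fun i => hf.fderiv_apply_const (n := 2) (e i)
  have hDD : ∀ i, ContDiff ℝ 1 fun y => fderiv ℝ (fun z => fderiv ℝ f z (e i)) y (e i) :=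
    fun i => (hD i).fderiv_apply_const (n := 1) (e i)
  have hcomm : ∀ i, fderiv ℝ (fun y => fderiv ℝ (fun z => fderiv ℝ f z z) y (e i)) x (e i)
      = 2 * fderiv ℝ (fun y => fderiv ℝ f y (e i)) x (e i)
        + fderiv ℝ (fun y => fderiv ℝ (fun z => fderiv ℝ f z (e i)) y (e i)) x x := by
    intro i
    have h : (fun y => fderiv ℝ (fun z => fderiv ℝ f z z) y (e i))
        = fun y => fderiv ℝ f y (e i) + fderiv ℝ (fun z => fderiv ℝ f z (e i)) y y :=
      funext fun y => fderiv_fderiv_apply_self (hf.of_le (by norm_num)) y (e i)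
    rw [h, fderiv_fun_add ((hD i).differentiable two_ne_zero x)
      (((hD i).fderiv_apply_self (n := 1)).differentiable one_ne_zero x),
      _root_.add_apply, fderiv_fderiv_apply_self (hD i) x (e i)]
    ring
  have hlap : fderiv ℝ (lap f) x x
      = ∑ i, fderiv ℝ (fun y => fderiv ℝ (fun z => fderiv ℝ f z (e i)) y (e i)) x x := by
    rw [show lap f = fun y => ∑ i, fderiv ℝ (fun z => fderiv ℝ f z (e i)) y (e i) from rfl,
      fderiv_fun_sum fun i _ => (hDD i).differentiable one_ne_zero x,
      _root_.sum_apply]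
  rw [hlap, lap, Finset.sum_congr rfl fun i _ => hcomm i, Finset.sum_add_distrib,
    ← Finset.mul_sum]
  rfl

end Laplacian

theorem conv_smul (g : R3 → ℝ) (x : R3) {t : ℝ} (ht : 0 < t) :
    conv g (t • x) = t ^ 2 * ∫ z, g (t • z) / ‖x - z‖ := by
  have h := Measure.integral_comp_smul_of_nonneg volume (fun y => g y / ‖t • x - y‖) t
    (hR := ht.le)
  have hkernel : ∀ z : R3, g (t • z) / ‖t • x - t • z‖ = t⁻¹ * (g (t • z) / ‖x - z‖) := by
    intro z
    rw [← smul_sub, norm_smul, Real.norm_eq_abs, abs_of_pos ht]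
    field_simp
  simp only [hkernel, integral_const_mul, finrank_euclideanSpace_fin, smul_eq_mul] at h
  calc conv g (t • x) = t ^ 3 * ((t ^ 3)⁻¹ * conv g (t • x)) := by field_simp
    _ = t ^ 2 * ∫ z, g (t • z) / ‖x - z‖ := by
      rw [conv, ← h]
      field_simp

theorem hasDerivAt_conv_smul (g : 𝓢(R3, ℝ)) (x : R3) :
    HasDerivAt (fun t : ℝ => conv g (t • x)) (2 * conv g x + conv g.euler x) 1 := by
  have hscaled : HasDerivAt (fun t : ℝ => t ^ 2 * ∫ z, g (t • z) / ‖x - z‖)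
      (2 * conv g x + conv g.euler x) 1 := by
    simpa [conv] using (hasDerivAt_pow 2 (1 : ℝ)).fun_mul
      (g.hasDerivAt_integral_comp_smul_div_norm_sub (μ := volume) (by simp) x)
  have hdil : (fun t : ℝ => conv g (t • x)) =ᶠ[𝓝 1]
      fun t => t ^ 2 * ∫ z, g (t • z) / ‖x - z‖ :=
    (eventually_gt_nhds one_pos).mono fun t ht => conv_smul g x ht
  exact hscaled.congr_of_eventuallyEq hdil

theorem stmt_7_general (m lam : ℝ) (Q : 𝓢(R3, ℝ))
    (heq : ∀ x : R3,
      -(1 / (2 * m)) * lap (⇑Q) x + lam * Q x = conv (fun y => (Q y) ^ 2) x * Q x) :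
    ∀ x : R3,
      Lplus m lam (⇑Q) (fun y => fderiv ℝ (⇑Q) y y + 2 * Q y) x = -2 * lam * Q x := by
  intro x
  have hQ3 : ContDiff ℝ 3 Q := Q.smooth 3
  have hQ2 : ContDiff ℝ 2 Q := Q.smooth 2
  set Qsq : 𝓢(R3, ℝ) := SchwartzMap.pairing (ContinuousLinearMap.mul ℝ ℝ) Q Q
  have hQsq : ⇑Qsq = fun y => Q y ^ 2 := funext fun y => (sq (Q y)).symm
  have hEQsq : ⇑Qsq.euler = fun y => 2 * Q y * fderiv ℝ Q y y := funext fun y => by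
    simp [Qsq, SchwartzMap.pairing_apply, fderiv_fun_mul Q.differentiableAt Q.differentiableAt]
    ring
  set V := conv fun y => Q y ^ 2
  set J := conv (fun y => 2 * Q y * fderiv ℝ Q y y) x
  -- differentiate `V * Q = lam * Q - lap Q / (2m)` along the ray through `x`
  have hray : (2 * V x + J) * Q x + V x * fderiv ℝ Q x x
      = lam * fderiv ℝ Q x x - 1 / (2 * m) * fderiv ℝ (lap Q) x x := by
    have hV : HasDerivAt (fun t : ℝ => V (t • x)) (2 * V x + J) 1 := by
      simpa only [hQsq, hEQsq] using hasDerivAt_conv_smul Qsq x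
    have hQray := Q.differentiableAt.hasDerivAt_comp_smul (x := x)
    have hlapray := ((hQ3.lap (n := 1)).differentiable one_ne_zero x).hasDerivAt_comp_smul
    have hfun : (fun t : ℝ => V (t • x) * Q (t • x))
        = fun t => lam * Q (t • x) - 1 / (2 * m) * lap Q (t • x) := funext fun t => by
      linarith [heq (t • x)]
    have hprod := hV.fun_mul hQray
    rw [one_smul] at hprod
    refine hprod.unique ?_
    rw [hfun]
    exact (hQray.const_mul lam).fun_sub (hlapray.const_mul _)
  have hlap : lap (fun y => fderiv ℝ Q y y + 2 * Q y) x
      = 4 * lap Q x + fderiv ℝ (lap Q) x x := by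
    rw [lap_add (hQ3.fderiv_apply_self (n := 2)) (contDiff_const.mul hQ2), lap_const_mul 2 hQ2,
      lap_fderiv_apply_self hQ3]
    ring
  have hconv : conv (fun y => Q y * (fderiv ℝ Q y y + 2 * Q y)) x = J / 2 + 2 * V x := by
    have hint := fun g : 𝓢(R3, ℝ) => g.integrable_div_norm_sub (μ := volume) (by simp) x
    have hJ := hint Qsq.euler
    have hV := hint Qsq
    simp only [hQsq, hEQsq] at hJ hV
    calc conv (fun y => Q y * (fderiv ℝ Q y y + 2 * Q y)) x
        = ∫ y, (2 * Q y * fderiv ℝ Q y y / ‖x - y‖) / 2 + 2 * (Q y ^ 2 / ‖x - y‖) := by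
          unfold conv
          congr 1 with y
          ring
      _ = J / 2 + 2 * V x := by
          rw [integral_add (hJ.div_const 2) (hV.const_mul 2), integral_div, integral_const_mul]
          rfl
  simp only [Lplus]
  rw [hlap, hconv]
  linear_combination 4 * heq x - hray

/-- `L₊(x·∇Q∞ + 2Q∞) = −2λQ∞`. -/
theorem stmt_7 (m lam : ℝ) (hm : 0 < m) (hlam : 0 < lam)
    (Q : 𝓢(R3, ℝ)) (hpos : ∀ x, 0 < Q x) (hrad : Radial Q)
    (heq : ∀ x : R3,
      -(1 / (2 * m)) * lap (⇑Q) x + lam * Q x = conv (fun y => (Q y) ^ 2) x * Q x) :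
    ∀ x : R3,
      Lplus m lam (⇑Q) (fun y => fderiv ℝ (⇑Q) y y + 2 * Q y) x = -2 * lam * Q x :=
  stmt_7_general m lam Q heq
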